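/- arXiv:2403.17557 — 2 statements merged into one kernel-verified Lean document; each statement's English description precedes it below -/
import Mathlib

section
/- If f : [0,∞) → ℝ is a superquadratic function, then for all 0 ≤ x < y: f((x+y)/2) + 2∫₀^{1/2} f(u·|x−y|) du ≤ (1/(y−x))·∫ₓ^y f(t) dt ≤ (f(x)+f(y))/2 − 2f(0) − 2∫₀¹ (1−u)·f(u·|x−y|) du. -/
/-!
Both bounds come from integrating the superquadratic inequality at a well-chosen base point.
For the lower bound take the midpoint `m` as base point: integrating
`f t ≥ f m + C (t - m) + f |t - m|` over `[x, y]` kills the linear term, and the last term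
integrates to twice the integral of `f` over `[0, (y - x)/2]`. For the upper bound take the
point `(1 - u) x + u y` as base point and compare with both endpoints; the convex combination
of the two inequalities again kills the linear term, and integrating over `u ∈ [0, 1]` gives
`(f x + f y)/2` minus two correction integrals, equal under `u ↦ 1 - u`. The extra `-2 f 0` is
harmless since `f 0 ≤ 0` (take `x = y = 0` in the definition).
-/

/-- A function `f : [0,∞) → ℝ` is superquadratic if for every `x ≥ 0` there exists a
constant `C ∈ ℝ` such that `f y ≥ f x + C * (y - x) + f |y - x|` for all `y ≥ 0`. -/
def Superquadratic (f : ℝ → ℝ) : Prop :=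
  ∀ x : ℝ, 0 ≤ x → ∃ C : ℝ, ∀ y : ℝ, 0 ≤ y → f x + C * (y - x) + f (|y - x|) ≤ f y

open intervalIntegral

theorem integral_comp_abs_sub_midpoint {f : ℝ → ℝ} (hf : Continuous f) {a b : ℝ}
    (hab : a ≤ b) :
    ∫ t in a..b, f |t - (a + b) / 2| = 2 * ∫ s in (0 : ℝ)..(b - a) / 2, f s := by
  have hr : 0 ≤ (b - a) / 2 := by linarith
  have hint : ∀ c d : ℝ, IntervalIntegrable (fun s => f |s|) MeasureTheory.volume c d :=
    fun c d => (hf.comp continuous_abs).intervalIntegrable c d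
  have hneg : ∫ s in -((b - a) / 2)..0, f |s| = ∫ s in (0 : ℝ)..(b - a) / 2, f |s| := by
    simpa only [abs_neg, neg_zero] using
      (integral_comp_neg (a := 0) (b := (b - a) / 2) (fun s => f |s|)).symm
  have hpos : ∫ s in (0 : ℝ)..(b - a) / 2, f |s| = ∫ s in (0 : ℝ)..(b - a) / 2, f s :=
    integral_congr fun s hs => by
      rw [Set.uIcc_of_le hr] at hs
      simp only [abs_of_nonneg hs.1]
  calc ∫ t in a..b, f |t - (a + b) / 2|
      = ∫ s in -((b - a) / 2)..(b - a) / 2, f |s| := by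
        rw [integral_comp_sub_right (fun s => f |s|)]; ring_nf
    _ = 2 * ∫ s in (0 : ℝ)..(b - a) / 2, f s := by
        rw [← integral_add_adjacent_intervals (hint _ 0) (hint 0 _), hneg, hpos, two_mul]

theorem mul_integral_comp_convex_combination (f : ℝ → ℝ) (a b : ℝ) :
    (b - a) * ∫ u in (0 : ℝ)..1, f ((1 - u) * a + u * b) = ∫ t in a..b, f t := by
  have := smul_integral_comp_add_mul (a := 0) (b := 1) f (b - a) a
  simp only [mul_zero, add_zero, mul_one, add_sub_cancel, smul_eq_mul] at this
  rw [← this]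
  congr 1
  exact integral_congr fun u _ => by ring_nf

namespace Superquadratic

variable {f : ℝ → ℝ}

theorem map_zero_nonpos (hf : Superquadratic f) : f 0 ≤ 0 := by
  obtain ⟨C, hC⟩ := hf 0 le_rfl
  simpa using hC 0 le_rfl

theorem map_convex_combination_add_le (hf : Superquadratic f) {a b u : ℝ} (ha : 0 ≤ a)
    (hb : 0 ≤ b) (hu₀ : 0 ≤ u) (hu₁ : u ≤ 1) :
    f ((1 - u) * a + u * b) + (1 - u) * f (u * |a - b|) + u * f ((1 - u) * |a - b|) ≤
      (1 - u) * f a + u * f b := by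
  set t := (1 - u) * a + u * b
  obtain ⟨C, hC⟩ := hf t (by positivity)
  have ha' := hC a ha
  have hb' := hC b hb
  have hat : a - t = u * (a - b) := by ring
  have hbt : b - t = (1 - u) * (b - a) := by ring
  rw [hat, abs_mul, abs_of_nonneg hu₀] at ha'
  rw [hbt, abs_mul, abs_of_nonneg (sub_nonneg.mpr hu₁), abs_sub_comm] at hb'
  -- the linear terms `C * (a - t)` and `C * (b - t)` cancel in this convex combination
  nlinarith [mul_le_mul_of_nonneg_left ha' (sub_nonneg.mpr hu₁),
    mul_le_mul_of_nonneg_left hb' hu₀]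

theorem mul_map_midpoint_add_le_integral (hf : Superquadratic f) (hf_cont : Continuous f)
    {x y : ℝ} (hx : 0 ≤ x) (hxy : x ≤ y) :
    (y - x) * f ((x + y) / 2) + 2 * ∫ s in (0 : ℝ)..(y - x) / 2, f s ≤
      ∫ t in x..y, f t := by
  obtain ⟨C, hC⟩ := hf ((x + y) / 2) (by linarith)
  set m := (x + y) / 2
  have hlinear : ∫ t in x..y, (t - m) = 0 := by
    simp only [integral_comp_sub_right (fun t => t), integral_id, m]
    ring
  have hsupport : ∫ t in x..y, (f m + C * (t - m) + f |t - m|) =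
      (y - x) * f m + 2 * ∫ s in (0 : ℝ)..(y - x) / 2, f s := by
    rw [integral_add, integral_add, integral_const, integral_const_mul, hlinear,
      integral_comp_abs_sub_midpoint hf_cont hxy, smul_eq_mul, mul_zero, add_zero]
    all_goals exact Continuous.intervalIntegrable (by fun_prop) _ _
  rw [← hsupport]
  exact integral_mono_on hxy (Continuous.intervalIntegrable (by fun_prop) _ _)
    (hf_cont.intervalIntegrable _ _) fun t ht => hC t (hx.trans ht.1)

theorem integral_convex_combination_add_le (hf : Superquadratic f) (hf_cont : Continuous f)
    {x y : ℝ} (hx : 0 ≤ x) (hy : 0 ≤ y) :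
    (∫ u in (0 : ℝ)..1, f ((1 - u) * x + u * y)) +
        2 * ∫ u in (0 : ℝ)..1, (1 - u) * f (u * |x - y|) ≤ (f x + f y) / 2 := by
  set h := |x - y|
  have hreflect : ∫ u in (0 : ℝ)..1, u * f ((1 - u) * h) =
      ∫ u in (0 : ℝ)..1, (1 - u) * f (u * h) := by
    simpa using integral_comp_sub_left (fun v => (1 - v) * f (v * h)) (1 : ℝ) (a := 0) (b := 1)
  have hweight : ∫ u in (0 : ℝ)..1, (1 - u) = 1 / 2 := by
    rw [integral_sub intervalIntegrable_const intervalIntegrable_id]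
    norm_num
  have hmono := integral_mono_on (μ := MeasureTheory.volume) zero_le_one
    (f := fun u => f ((1 - u) * x + u * y))
    (g := fun u => (1 - u) * f x + u * f y - (1 - u) * f (u * h) - u * f ((1 - u) * h))
    (Continuous.intervalIntegrable (by fun_prop) _ _)
    (Continuous.intervalIntegrable (by fun_prop) _ _) fun u hu => by
      linarith [hf.map_convex_combination_add_le hx hy hu.1 hu.2]
  have hlinear : ∫ u in (0 : ℝ)..1,
      ((1 - u) * f x + u * f y - (1 - u) * f (u * h) - u * f ((1 - u) * h)) =
      (f x + f y) / 2 - 2 * ∫ u in (0 : ℝ)..1, (1 - u) * f (u * h) := by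
    rw [integral_sub, integral_sub, integral_add, integral_mul_const, integral_mul_const,
      hreflect, hweight, integral_id]
    · ring
    all_goals exact Continuous.intervalIntegrable (by fun_prop) _ _
  linarith

end Superquadratic

theorem hermite_hadamard_superquadratic
    (f : ℝ → ℝ) (hf : Superquadratic f) (hf_cont : Continuous f)
    (x y : ℝ) (hx : 0 ≤ x) (hxy : x < y) :
    f ((x + y) / 2) + 2 * (∫ u in (0 : ℝ)..(1 / 2), f (u * |x - y|)) ≤
        (1 / (y - x)) * (∫ t in x..y, f t) ∧
      (1 / (y - x)) * (∫ t in x..y, f t) ≤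
        (f x + f y) / 2 - 2 * f 0 - 2 * (∫ u in (0 : ℝ)..1, (1 - u) * f (u * |x - y|)) := by
  have hh : 0 < y - x := sub_pos.mpr hxy
  have hrescale : ∫ u in (0 : ℝ)..(1 / 2), f (u * |x - y|) =
      (y - x)⁻¹ * ∫ s in (0 : ℝ)..(y - x) / 2, f s := by
    rw [abs_sub_comm, abs_of_pos hh, integral_comp_mul_right f hh.ne', smul_eq_mul, zero_mul,
      one_div_mul_eq_div]
  have hmidpoint := hf.mul_map_midpoint_add_le_integral hf_cont hx hxy.le
  have hendpoints := hf.integral_convex_combination_add_le hf_cont hx (hx.trans hxy.le)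
  have hf₀ := hf.map_zero_nonpos
  rw [one_div (y - x)]
  constructor
  · rw [hrescale, le_inv_mul_iff₀ hh]
    refine le_of_eq_of_le ?_ hmidpoint
    rw [mul_add, mul_left_comm, mul_inv_cancel_left₀ hh.ne']
  · rw [← mul_integral_comp_convex_combination f x y, inv_mul_cancel_left₀ hh.ne']
    linarith
end

section
/- Let f : [0,∞) → ℝ be a continuous superquadratic function, let 0 < m < M, and let β(t) = ((t−m)/(M−m))·f(M−t) + ((M−t)/(M−m))·f(t−m). Let H be a complex Hilbert space and let A, B, C, D be positive bounded operators on H with A + D = B + C and 0 ≤ A ≤ m·I ≤ B ≤ C ≤ M·I ≤ D (Loewner order). Let Φ : B(H) → B(H) be a unital positive linear map. Then: Φ(f(B)) + f(Φ(C)) + Φ(β(B)) + β(Φ(C)) ≤ Φ(f(A)) + f(Φ(D)) − Φ(f(m·I − A)) − f(Φ(D) − M·I) + ((f(M−m))/(M−m))·(Φ(A − D) + (M−m)·I). -/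
/-- The function `β` of the statement. -/
noncomputable def mercerCorrection (f : ℝ → ℝ) (m M t : ℝ) : ℝ :=
  (t - m) / (M - m) * f (M - t) + (M - t) / (M - m) * f (t - m)

namespace Superquadratic

variable {f : ℝ → ℝ} {m M : ℝ}

theorem add_mercerCorrection_le_chord (hf : Superquadratic f) (hm : 0 ≤ m) {t : ℝ}
    (hmt : m ≤ t) (htM : t ≤ M) (hmM : m < M) :
    f t + mercerCorrection f m M t ≤ f m + slope f m M * (t - m) := by
  obtain ⟨C, hC⟩ := hf t (hm.trans hmt)
  have hm' := hC m hm
  have hM' := hC M (by linarith)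
  rw [abs_of_nonpos (by linarith), neg_sub] at hm'
  rw [abs_of_nonneg (by linarith)] at hM'
  have key : (M - m) * f t + (t - m) * f (M - t) + (M - t) * f (t - m) ≤
      (M - t) * f m + (t - m) * f M := by
    linear_combination (M - t) * hm' + (t - m) * hM'
  have hMm : 0 < M - m := by linarith
  calc f t + mercerCorrection f m M t
      = ((M - m) * f t + (t - m) * f (M - t) + (M - t) * f (t - m)) / (M - m) := by
        unfold mercerCorrection; field_simp; ring
    _ ≤ ((M - t) * f m + (t - m) * f M) / (M - m) := by gcongr
    _ = f m + slope f m M * (t - m) := by rw [slope_def_field]; field_simp; ring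

theorem support_add_le_of_le_left (hf : Superquadratic f) {x : ℝ} (hx : 0 ≤ x) (hxm : x ≤ m)
    (hmM : m < M) :
    f m + (slope f m M - f (M - m) / (M - m)) * (x - m) + f (m - x) ≤ f x := by
  obtain ⟨C, hC⟩ := hf m (hx.trans hxm)
  have hCx := hC x hx
  have hCM := hC M (by linarith)
  rw [abs_of_nonpos (by linarith), neg_sub] at hCx
  rw [abs_of_nonneg (by linarith)] at hCM
  have hMm : 0 < M - m := by linarith
  have hC_le : C ≤ slope f m M - f (M - m) / (M - m) := by
    rw [slope_def_field, ← sub_div, le_div_iff₀ hMm]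
    linarith
  linear_combination hCx + (m - x) * hC_le

theorem support_add_le_of_right_le (hf : Superquadratic f) (hm : 0 ≤ m) (hmM : m < M) {x : ℝ}
    (hMx : M ≤ x) :
    f M + (slope f m M + f (M - m) / (M - m)) * (x - M) + f (x - M) ≤ f x := by
  obtain ⟨C, hC⟩ := hf M (by linarith)
  have hCx := hC x (by linarith)
  have hCm := hC m hm
  rw [abs_of_nonneg (by linarith)] at hCx
  rw [abs_of_nonpos (by linarith), neg_sub] at hCm
  have hMm : 0 < M - m := by linarith
  have hC_ge : slope f m M + f (M - m) / (M - m) ≤ C := by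
    rw [slope_def_field, ← add_div, div_le_iff₀ hMm]
    linarith
  linear_combination hCx + (x - M) * hC_ge

end Superquadratic

theorem continuous_mercerCorrection {f : ℝ → ℝ} (hf : Continuous f) (m M : ℝ) :
    Continuous (mercerCorrection f m M) := by
  unfold mercerCorrection; fun_prop

section CFC

variable {𝒜 : Type*} [CStarAlgebra 𝒜]

theorem cfc_const_add_mul_sub (b s c : ℝ) {a : 𝒜} (ha : IsSelfAdjoint a) :
    cfc (fun t : ℝ => b + s * (t - c)) a = b • 1 + s • (a - c • 1) := by
  rw [cfc_const_add b _ a, cfc_const_mul s _ a, cfc_sub (fun t : ℝ => t) (fun _ => c) a,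
    cfc_id' ℝ a, cfc_const c a, Algebra.algebraMap_eq_smul_one, Algebra.algebraMap_eq_smul_one]

theorem cfc_comp_sub_const {f : ℝ → ℝ} (hf : Continuous f) (c : ℝ) {a : 𝒜}
    (ha : IsSelfAdjoint a) : cfc (fun t => f (t - c)) a = cfc f (a - c • 1) := by
  rw [cfc_comp' f (fun t => t - c) a hf.continuousOn, cfc_sub (fun t : ℝ => t) (fun _ => c) a,
    cfc_id' ℝ a, cfc_const c a, Algebra.algebraMap_eq_smul_one]

theorem cfc_comp_const_sub {f : ℝ → ℝ} (hf : Continuous f) (c : ℝ) {a : 𝒜}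
    (ha : IsSelfAdjoint a) : cfc (fun t => f (c - t)) a = cfc f (c • 1 - a) := by
  rw [cfc_comp' f (fun t => c - t) a hf.continuousOn, cfc_sub (fun _ => c) (fun t : ℝ => t) a,
    cfc_id' ℝ a, cfc_const c a, Algebra.algebraMap_eq_smul_one]

variable [PartialOrder 𝒜] [StarOrderedRing 𝒜]

theorem IsSelfAdjoint.of_smul_one_le {r : ℝ} {a : 𝒜} (h : r • 1 ≤ a) : IsSelfAdjoint a := by
  simpa using (sub_nonneg.2 h).isSelfAdjoint.add ((IsSelfAdjoint.all r).smul (.one 𝒜))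

theorem le_of_mem_spectrum_of_le_smul_one {r x : ℝ} {a : 𝒜} (ha : IsSelfAdjoint a)
    (h : a ≤ r • 1) (hx : x ∈ spectrum ℝ a) : x ≤ r :=
  (le_algebraMap_iff_spectrum_le ha).1 (by rwa [Algebra.algebraMap_eq_smul_one]) x hx

theorem ge_of_mem_spectrum_of_smul_one_le {r x : ℝ} {a : 𝒜} (h : r • 1 ≤ a)
    (hx : x ∈ spectrum ℝ a) : r ≤ x :=
  (algebraMap_le_iff_le_spectrum (IsSelfAdjoint.of_smul_one_le h)).1
    (by rwa [Algebra.algebraMap_eq_smul_one]) x hx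

namespace Superquadratic

variable {f : ℝ → ℝ} {m M : ℝ}

theorem cfc_add_cfc_mercerCorrection_le_chord (hf : Superquadratic f) (hf_cont : Continuous f)
    (hm : 0 ≤ m) (hmM : m < M) {a : 𝒜} (hma : m • 1 ≤ a) (haM : a ≤ M • 1) :
    cfc f a + cfc (mercerCorrection f m M) a ≤ f m • 1 + slope f m M • (a - m • 1) := by
  have ha := IsSelfAdjoint.of_smul_one_le hma
  rw [← cfc_add a f _ hf_cont.continuousOn (continuous_mercerCorrection hf_cont m M).continuousOn,
    ← cfc_const_add_mul_sub _ _ _ ha]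
  refine cfc_mono (fun t ht => ?_)
    (hf_cont.add (continuous_mercerCorrection hf_cont m M)).continuousOn
  exact hf.add_mercerCorrection_le_chord hm (ge_of_mem_spectrum_of_smul_one_le hma ht)
    (le_of_mem_spectrum_of_le_smul_one ha haM ht) hmM

theorem support_add_cfc_le_of_le_smul_one (hf : Superquadratic f) (hf_cont : Continuous f)
    (hmM : m < M) {a : 𝒜} (ha : 0 ≤ a) (ham : a ≤ m • 1) :
    f m • 1 + (slope f m M - f (M - m) / (M - m)) • (a - m • 1) + cfc f (m • 1 - a) ≤
      cfc f a := by
  rw [← cfc_const_add_mul_sub _ _ _ ha.isSelfAdjoint,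
    ← cfc_comp_const_sub hf_cont _ ha.isSelfAdjoint,
    ← cfc_add a _ (fun t => f (m - t))]
  exact cfc_mono fun x hx => hf.support_add_le_of_le_left (spectrum_nonneg_of_nonneg ha hx)
    (le_of_mem_spectrum_of_le_smul_one ha.isSelfAdjoint ham hx) hmM

theorem support_add_cfc_le_of_smul_one_le (hf : Superquadratic f) (hf_cont : Continuous f)
    (hm : 0 ≤ m) (hmM : m < M) {a : 𝒜} (hMa : M • 1 ≤ a) :
    f M • 1 + (slope f m M + f (M - m) / (M - m)) • (a - M • 1) + cfc f (a - M • 1) ≤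
      cfc f a := by
  have ha := IsSelfAdjoint.of_smul_one_le hMa
  rw [← cfc_const_add_mul_sub _ _ _ ha, ← cfc_comp_sub_const hf_cont _ ha,
    ← cfc_add a _ (fun t => f (t - M))]
  exact cfc_mono fun x hx =>
    hf.support_add_le_of_right_le hm hmM (ge_of_mem_spectrum_of_smul_one_le hMa hx)

end Superquadratic

end CFC

theorem operator_mercer_superquadratic_variant
    {H : Type*} [NormedAddCommGroup H] [InnerProductSpace ℂ H] [CompleteSpace H]
    (f : ℝ → ℝ) (hf_cont : Continuous f) (hf : Superquadratic f)
    (m M : ℝ) (hm : 0 < m) (hmM : m < M)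
    (β : ℝ → ℝ)
    (hβ : ∀ t : ℝ,
      β t = (t - m) / (M - m) * f (M - t) + (M - t) / (M - m) * f (t - m))
    (A B C D : H →L[ℂ] H)
    (hA : 0 ≤ A) (hAmI : A ≤ m • 1) (hmIB : m • (1 : H →L[ℂ] H) ≤ B)
    (hBC : B ≤ C) (hCMI : C ≤ M • 1) (hMID : M • (1 : H →L[ℂ] H) ≤ D)
    (hsum : A + D = B + C)
    (Φ : (H →L[ℂ] H) →ₗ[ℂ] (H →L[ℂ] H))
    (hΦ_unital : Φ 1 = 1) (hΦ_pos : ∀ X : H →L[ℂ] H, 0 ≤ X → 0 ≤ Φ X) :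
    Φ (cfc f B) + cfc f (Φ C) + Φ (cfc β B) + cfc β (Φ C) ≤
      Φ (cfc f A) + cfc f (Φ D) - Φ (cfc f (m • 1 - A)) - cfc f (Φ D - M • 1)
        + (f (M - m) / (M - m)) • (Φ (A - D) + (M - m) • 1) := by
  obtain rfl : β = mercerCorrection f m M := funext hβ
  have hΦ_mono : Monotone Φ := (monotone_iff_map_nonneg Φ).2 hΦ_pos
  have hΦ_smul_one (r : ℝ) : Φ (r • 1) = r • 1 := by
    rw [LinearMap.map_smul_of_tower, hΦ_unital]
  have hB := hΦ_mono
    (hf.cfc_add_cfc_mercerCorrection_le_chord hf_cont hm.le hmM hmIB (hBC.trans hCMI))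
  have hC := hf.cfc_add_cfc_mercerCorrection_le_chord hf_cont hm.le hmM
    (hΦ_smul_one m ▸ hΦ_mono (hmIB.trans hBC)) (hΦ_smul_one M ▸ hΦ_mono hCMI)
  have hA := hΦ_mono (hf.support_add_cfc_le_of_le_smul_one hf_cont hmM hA hAmI)
  have hD :=
    hf.support_add_cfc_le_of_smul_one_le hf_cont hm.le hmM (hΦ_smul_one M ▸ hΦ_mono hMID)
  simp only [map_add, map_sub, LinearMap.map_smul_of_tower, hΦ_unital] at hA hB
  have hΦ_sum : Φ B + Φ C = Φ A + Φ D := by rw [← map_add, ← map_add, hsum]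
  have hfM : f M = f m + slope f m M * (M - m) := by
    rw [slope_def_field]; field_simp [(sub_pos.2 hmM).ne']; ring
  set s := slope f m M
  set k := f (M - m) / (M - m)
  calc _ = (Φ (cfc f B) + Φ (cfc (mercerCorrection f m M) B))
        + (cfc f (Φ C) + cfc (mercerCorrection f m M) (Φ C)) := by abel
    _ ≤ (f m • 1 + s • (Φ B - m • 1)) + (f m • 1 + s • (Φ C - m • 1)) := add_le_add hB hC
    _ = (f m • 1 + (s - k) • (Φ A - m • 1) + Φ (cfc f (m • 1 - A)))
        + (f M • 1 + (s + k) • (Φ D - M • 1) + cfc f (Φ D - M • 1))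
        - Φ (cfc f (m • 1 - A)) - cfc f (Φ D - M • 1) + k • (Φ (A - D) + (M - m) • 1) := by
      rw [map_sub, hfM]
      linear_combination (norm := module) s • hΦ_sum
    _ ≤ _ := by gcongr
end
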